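/- Fix an integer d ≥ 3 and B ∈ ℝ. There exists θ_c = θ_c(d,B) > 1 such that: for 1 < θ ≤ θ_c, the unique fixed point t_*(θ) of F_{θ,B} is the only fixed point of G_{θ,B} = F_{θ,B} ∘ F_{θ,B}; and for θ > θ_c, G_{θ,B} has exactly three fixed points t^-(θ) < t_*(θ) < t^+(θ), with F_{θ,B}(t^+(θ)) = t^-(θ) and F_{θ,B}(t^-(θ)) = t^+(θ). Moreover the fixed points depend continuously on θ, and t^±(θ) → t_*(θ_c) as θ decreases to θ_c. -/

import Mathlib

open Set Filter

/-- The anti-ferromagnetic Ising belief-propagation map in log-likelihood-ratio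
coordinates: `F_{θ,B}(t) = 2B + (d-1) log((e^t + θ)/(θ e^t + 1))`. -/
noncomputable def isingF (d : ℕ) (θ B t : ℝ) : ℝ :=
  2 * B + ((d:ℝ) - 1) * Real.log ((Real.exp t + θ) / (θ * Real.exp t + 1))

/-!
`F = F_{θ,B}` has derivative `-φ` with `φ(t) = (d-1)(θ²-1)/(θ²+1+2θ cosh t)`, so `G = F ∘ F` has
`G'(t) = φ(F t) φ(t)`. Since `log φ` is strictly concave, `u = log G' = log φ + log φ ∘ F` has
`u'' < 0` at every critical point, so once `u` has not increased it keeps strictly decreasing. By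
the mean value theorem `u` vanishes between two fixed points of `G`: hence `G` has at most three
fixed points, and if `φ(t_*) ≤ 1`, i.e. `u(t_*) ≤ 0`, a 2-cycle `t < t_* < F t` is impossible.
If `φ(t_*) > 1` then `G'(t_*) > 1` and `G` is bounded, so `G` has a fixed point `t⁻ < t_*`, and
`t⁺ = F t⁻` is the third one.

As `θ` grows, `|t_*(θ)|` does not increase, so `θ ↦ φ(θ, t_*(θ))` is continuous and strictly
increasing and `θ_c` is where it crosses `1`. For `a < t_*`, whether `a < t⁻(θ)` is read off the
sign of `G(a) - a`, which is locally constant in `θ`; this gives the continuity of `t⁻` and its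
limit at `θ_c`.
-/

open Real Topology Function

section RealFunctions

variable {f : ℝ → ℝ} {a b x y : ℝ}

theorem StrictAnti.lt_apply_iff_lt_of_isFixedPt (hf : StrictAnti f) (hx : IsFixedPt f x) :
    a < f a ↔ a < x := by
  constructor
  · intro ha
    by_contra! h
    linarith [hf.antitone h, hx.eq]
  · intro ha
    linarith [hf ha, hx.eq]

theorem StrictAnti.apply_lt_iff_lt_of_isFixedPt (hf : StrictAnti f) (hx : IsFixedPt f x) :
    f a < a ↔ x < a := by
  constructor
  · intro ha
    by_contra! h
    linarith [hf.antitone h, hx.eq]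
  · intro ha
    linarith [hf ha, hx.eq]

theorem StrictAnti.eq_of_isFixedPt (hf : StrictAnti f) (hx : IsFixedPt f x)
    (hy : IsFixedPt f y) : x = y := by
  by_contra h
  rcases lt_or_gt_of_ne h with h | h
  · exact ((hf.lt_apply_iff_lt_of_isFixedPt hy).2 h).ne' hx.eq
  · exact ((hf.lt_apply_iff_lt_of_isFixedPt hx).2 h).ne' hy.eq

theorem exists_isFixedPt_mem_Icc (hf : ContinuousOn f (Icc a b)) (hab : a ≤ b)
    (ha : a ≤ f a) (hb : f b ≤ b) : ∃ x ∈ Icc a b, IsFixedPt f x := by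
  obtain ⟨x, hx, hx0⟩ := intermediate_value_Icc' hab (hf.sub continuousOn_id)
    (show (0 : ℝ) ∈ Icc (f b - b) (f a - a) from ⟨by linarith, by linarith⟩)
  exact ⟨x, hx, sub_eq_zero.1 hx0⟩

theorem HasDerivAt.eventually_apply_lt_of_one_lt {f' : ℝ} (hf : HasDerivAt f f' x)
    (hx : IsFixedPt f x) (h : 1 < f') : ∀ᶠ y in 𝓝[<] x, f y < y := by
  have hslope := (hasDerivAt_iff_tendsto_slope.1 hf).mono_left (nhdsLT_le_nhdsNE x)
  filter_upwards [hslope.eventually (lt_mem_nhds h), self_mem_nhdsWithin] with y hy hyx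
  rw [slope_def_field, hx.eq, lt_div_iff_of_neg (sub_neg.2 hyx)] at hy
  linarith

theorem continuousAt_of_isFixedPt_of_strictAnti {X : Type*} [TopologicalSpace X]
    {f : X → ℝ → ℝ} {s : X → ℝ} {x₀ : X} (hf : ∀ t, ContinuousAt (fun x => f x t) x₀)
    (hanti : ∀ᶠ x in 𝓝 x₀, StrictAnti (f x)) (hs : ∀ᶠ x in 𝓝 x₀, IsFixedPt (f x) (s x)) :
    ContinuousAt s x₀ := by
  have hlt : ∀ a, ∀ᶠ x in 𝓝 x₀, (a < f x a ↔ a < s x) := fun a => by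
    filter_upwards [hanti, hs] with x hx hsx using hx.lt_apply_iff_lt_of_isFixedPt hsx
  have hgt : ∀ b, ∀ᶠ x in 𝓝 x₀, (f x b < b ↔ s x < b) := fun b => by
    filter_upwards [hanti, hs] with x hx hsx using hx.apply_lt_iff_lt_of_isFixedPt hsx
  refine tendsto_order.2 ⟨fun a ha => ?_, fun b hb => ?_⟩
  · filter_upwards [hlt a, (hf a).eventually (lt_mem_nhds ((hlt a).self_of_nhds.2 ha))]
      with x h h' using h.1 h'
  · filter_upwards [hgt b, (hf b).eventually (gt_mem_nhds ((hgt b).self_of_nhds.2 hb))]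
      with x h h' using h.1 h'

theorem lt_zero_of_hasDerivAt_neg_of_eq_zero {g g' : ℝ → ℝ} (hg : ∀ x, HasDerivAt g (g' x) x)
    (hneg : ∀ x, g x = 0 → g' x < 0) (hab : a < b) (ha : g a ≤ 0) : g b < 0 := by
  have hle : ∀ x, a ≤ x → g x ≤ 0 := fun x hx =>
    image_le_of_deriv_right_lt_deriv_boundary (fun y _ => (hg y).continuousAt.continuousWithinAt)
      (fun y _ => (hg y).hasDerivWithinAt) ha (fun _ => hasDerivAt_const _ (0 : ℝ))
      (fun y _ hy => hneg y hy) ⟨hx, le_rfl⟩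
  refine (hle b hab.le).lt_of_ne fun hb => (hneg b hb).ne ?_
  have hmax : IsLocalMax g b :=
    Filter.mem_of_superset (Ioi_mem_nhds hab) fun y hy => hb ▸ hle y (le_of_lt hy)
  exact hmax.hasDerivAt_eq_zero (hg b)

theorem apply_lt_of_apply_le_of_deriv2_neg {u u' u'' : ℝ → ℝ} (hu : ∀ x, HasDerivAt u (u' x) x)
    (hu' : ∀ x, HasDerivAt u' (u'' x) x) (hcrit : ∀ x, u' x = 0 → u'' x < 0) {x₁ x₂ x₃ : ℝ}
    (h₁₂ : x₁ < x₂) (h₂₃ : x₂ < x₃) (h : u x₂ ≤ u x₁) : u x₃ < u x₂ := by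
  have hcont : Continuous u := continuous_iff_continuousAt.2 fun x => (hu x).continuousAt
  obtain ⟨η₁, hη₁, hs₁⟩ := exists_hasDerivAt_eq_slope u u' h₁₂ hcont.continuousOn fun x _ => hu x
  obtain ⟨η₂, hη₂, hs₂⟩ := exists_hasDerivAt_eq_slope u u' h₂₃ hcont.continuousOn fun x _ => hu x
  have h₁ : u' η₁ ≤ 0 := hs₁ ▸ div_nonpos_of_nonpos_of_nonneg (by linarith) (by linarith)
  have h₂ := lt_zero_of_hasDerivAt_neg_of_eq_zero hu' hcrit (hη₁.2.trans hη₂.1) h₁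
  rw [hs₂, div_neg_iff] at h₂
  rcases h₂ with h₂ | h₂ <;> linarith

end RealFunctions

noncomputable def isingG (d : ℕ) (θ B : ℝ) : ℝ → ℝ := isingF d θ B ∘ isingF d θ B

noncomputable def isingDenom (θ t : ℝ) : ℝ := θ ^ 2 + 1 + 2 * θ * cosh t

noncomputable def isingPhi (d : ℕ) (θ t : ℝ) : ℝ := ((d : ℝ) - 1) * (θ ^ 2 - 1) / isingDenom θ t

/-- The logarithmic derivative of `isingPhi d θ`. -/
noncomputable def isingPsi (θ t : ℝ) : ℝ := -(2 * θ * sinh t) / isingDenom θ t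

section IsingMap

variable {d : ℕ} {θ B t : ℝ}

theorem isingDenom_pos (hθ : 0 ≤ θ) : 0 < isingDenom θ t := by
  unfold isingDenom
  positivity

theorem isingPhi_pos (hd : 2 ≤ d) (hθ : 1 < θ) : 0 < isingPhi d θ t := by
  have hd' : (1 : ℝ) < d := by exact_mod_cast hd
  have : 0 < θ ^ 2 - 1 := by nlinarith
  exact div_pos (mul_pos (by linarith) this) (isingDenom_pos (by linarith))

theorem isingPhi_nonneg (hd : 1 ≤ d) (hθ : 1 ≤ θ) : 0 ≤ isingPhi d θ t := by
  have hd' : (1 : ℝ) ≤ d := by exact_mod_cast hd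
  have : 0 ≤ θ ^ 2 - 1 := by nlinarith
  exact div_nonneg (mul_nonneg (by linarith) this) (isingDenom_pos (by linarith)).le

theorem isingF_neg (d : ℕ) (θ B t : ℝ) : isingF d θ (-B) (-t) = -isingF d θ B t := by
  have h : (exp (-t) + θ) / (θ * exp (-t) + 1) = ((exp t + θ) / (θ * exp t + 1))⁻¹ := by
    rw [inv_div, exp_neg, ← mul_div_mul_left _ _ (exp_pos t).ne']
    congr 1 <;> field_simp <;> ring
  rw [isingF, isingF, h, log_inv]
  ring

theorem isingF_one (d : ℕ) (B t : ℝ) : isingF d 1 B t = 2 * B := by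
  simp [isingF, add_comm]

theorem isingF_zero (hθ : 0 ≤ θ) : isingF d θ B 0 = 2 * B := by
  have : θ + 1 ≠ 0 := by linarith
  simp [isingF, add_comm, div_self this]

theorem hasDerivAt_isingF (hθ : 0 ≤ θ) : HasDerivAt (isingF d θ B) (-isingPhi d θ t) t := by
  have h₁ : 0 < exp t + θ := by positivity
  have h₂ : 0 < θ * exp t + 1 := by positivity
  have h := ((((hasDerivAt_exp t).add_const θ).div ((hasDerivAt_exp t).const_mul θ |>.add_const 1)
    h₂.ne').log (div_pos h₁ h₂).ne').const_mul ((d : ℝ) - 1) |>.const_add (2 * B)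
  refine h.congr_deriv ?_
  have hD : isingDenom θ t * exp t = (exp t + θ) * (θ * exp t + 1) := by
    rw [isingDenom, cosh_eq, exp_neg]
    field_simp
    ring
  have hD₀ : isingDenom θ t ≠ 0 := (isingDenom_pos hθ).ne'
  simp only [isingPhi, Pi.div_apply]
  field_simp
  linear_combination -((d : ℝ) - 1) * (θ ^ 2 - 1) * hD

theorem isingF_strictAnti (hd : 2 ≤ d) (hθ : 1 < θ) : StrictAnti (isingF d θ B) :=
  strictAnti_of_hasDerivAt_neg (fun _ => hasDerivAt_isingF (by linarith))
    fun _ => neg_neg_of_pos (isingPhi_pos hd hθ)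

theorem isingF_antitone (hd : 1 ≤ d) (hθ : 1 ≤ θ) : Antitone (isingF d θ B) :=
  antitone_of_hasDerivAt_nonpos (fun _ => hasDerivAt_isingF (by linarith))
    fun _ => neg_nonpos_of_nonneg (isingPhi_nonneg hd hθ)

theorem continuous_isingF (hθ : 0 ≤ θ) : Continuous (isingF d θ B) :=
  continuous_iff_continuousAt.2 fun _ => (hasDerivAt_isingF hθ).continuousAt

theorem Filter.Tendsto.isingF {α : Type*} {l : Filter α} {θf tf : α → ℝ} {θ₀ t₀ : ℝ}
    (hθ : Tendsto θf l (𝓝 θ₀)) (ht : Tendsto tf l (𝓝 t₀)) (hθ₀ : 0 < θ₀) :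
    Tendsto (fun x => isingF d (θf x) B (tf x)) l (𝓝 (isingF d θ₀ B t₀)) := by
  have h₁ : 0 < Real.exp t₀ + θ₀ := by positivity
  have h₂ : 0 < θ₀ * Real.exp t₀ + 1 := by positivity
  exact ((((ht.rexp.add hθ).div ((hθ.mul ht.rexp).add_const 1) h₂.ne').log
    (div_pos h₁ h₂).ne').const_mul _).const_add _

theorem sub_lt_isingF (hd : 2 ≤ d) (hθ : 1 < θ) :
    2 * B - ((d : ℝ) - 1) * log θ < isingF d θ B t := by
  have hd' : (1 : ℝ) < d := by exact_mod_cast hd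
  have he := exp_pos t
  have h₂ : 0 < θ * exp t + 1 := by positivity
  have harg : θ⁻¹ < (exp t + θ) / (θ * exp t + 1) := by
    rw [lt_div_iff₀ h₂, inv_mul_eq_div, div_lt_iff₀ (by linarith)]
    nlinarith
  have := log_lt_log (by positivity) harg
  rw [log_inv] at this
  rw [isingF]
  nlinarith

theorem isingF_le_isingF_of_le (hd : 1 ≤ d) (ht : 0 ≤ t) {θ₁ θ₂ : ℝ} (hθ₁ : 0 ≤ θ₁)
    (h : θ₁ ≤ θ₂) : isingF d θ₂ B t ≤ isingF d θ₁ B t := by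
  have hd' : (1 : ℝ) ≤ d := by exact_mod_cast hd
  have he : 1 ≤ exp t := one_le_exp ht
  have h₂ : 0 < θ₁ * exp t + 1 := by positivity
  have h₂' : 0 < θ₂ * exp t + 1 := by nlinarith
  have harg : (exp t + θ₂) / (θ₂ * exp t + 1) ≤ (exp t + θ₁) / (θ₁ * exp t + 1) := by
    rw [div_le_div_iff₀ h₂' h₂]
    nlinarith [mul_nonneg (sub_nonneg.2 h) (by nlinarith : (0 : ℝ) ≤ exp t ^ 2 - 1)]
  have := log_le_log (div_pos (by linarith) h₂') harg
  rw [isingF, isingF]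
  nlinarith

theorem abs_le_abs_of_isFixedPt_isingF (hd : 1 ≤ d) {θ₁ θ₂ s₁ s₂ : ℝ} (h₁ : 1 ≤ θ₁)
    (h₁₂ : θ₁ ≤ θ₂) (hs₁ : IsFixedPt (isingF d θ₁ B) s₁) (hs₂ : IsFixedPt (isingF d θ₂ B) s₂) :
    |s₂| ≤ |s₁| := by
  wlog hB : 0 ≤ B generalizing B s₁ s₂
  · have hneg : ∀ {θ s}, IsFixedPt (isingF d θ B) s → IsFixedPt (isingF d θ (-B)) (-s) :=
      fun hs => by rw [IsFixedPt, isingF_neg, hs.eq]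
    simpa using this (hneg hs₁) (hneg hs₂) (by linarith)
  have hnonneg : ∀ {θ s}, 1 ≤ θ → IsFixedPt (isingF d θ B) s → 0 ≤ s := by
    intro θ s hθ hs
    by_contra! h
    have := isingF_antitone (B := B) hd hθ h.le
    rw [hs.eq, isingF_zero (by linarith)] at this
    linarith
  have hs₁' := hnonneg h₁ hs₁
  rw [abs_of_nonneg hs₁', abs_of_nonneg (hnonneg (h₁.trans h₁₂) hs₂)]
  by_contra! h
  have hanti := isingF_antitone (B := B) hd (h₁.trans h₁₂) h.le
  have hθ := isingF_le_isingF_of_le (B := B) hd hs₁' (by linarith) h₁₂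
  rw [hs₂.eq] at hanti
  rw [hs₁.eq] at hθ
  linarith

end IsingMap

noncomputable def logDerivIsingG (d : ℕ) (θ B t : ℝ) : ℝ :=
  log (isingPhi d θ t) + log (isingPhi d θ (isingF d θ B t))

section TwoStep

variable {d : ℕ} {θ B t : ℝ}

theorem hasDerivAt_isingDenom (θ t : ℝ) :
    HasDerivAt (isingDenom θ) (2 * θ * sinh t) t :=
  ((hasDerivAt_cosh t).const_mul (2 * θ)).const_add (θ ^ 2 + 1)

theorem hasDerivAt_isingPhi (hθ : 0 ≤ θ) :
    HasDerivAt (isingPhi d θ) (isingPhi d θ t * isingPsi θ t) t := by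
  refine ((hasDerivAt_const t _).div (hasDerivAt_isingDenom θ t)
    (isingDenom_pos hθ).ne').congr_deriv ?_
  simp only [isingPhi, isingPsi]
  field_simp
  ring

theorem hasDerivAt_isingPsi (hθ : 0 ≤ θ) :
    HasDerivAt (isingPsi θ) (isingPsi θ t ^ 2 - 2 * θ * cosh t / isingDenom θ t) t := by
  refine (((hasDerivAt_sinh t).const_mul (2 * θ)).neg.div (hasDerivAt_isingDenom θ t)
    (isingDenom_pos hθ).ne').congr_deriv ?_
  simp only [isingPsi, Pi.neg_apply]
  field_simp
  ring

theorem isingPsi_sq_lt (hθ : 0 < θ) : isingPsi θ t ^ 2 < 2 * θ * cosh t / isingDenom θ t := by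
  have hD := isingDenom_pos (t := t) hθ.le
  have hP : (2 * θ * sinh t) ^ 2 < 2 * θ * cosh t * isingDenom θ t := by
    rw [isingDenom]
    nlinarith [cosh_sq' t, mul_pos (mul_pos hθ (cosh_pos t)) (by positivity : (0 : ℝ) < θ ^ 2 + 1)]
  rw [isingPsi, div_pow, neg_sq, div_lt_div_iff₀ (by positivity) hD]
  nlinarith [mul_lt_mul_of_pos_right hP hD]

theorem hasDerivAt_isingG (hθ : 0 ≤ θ) :
    HasDerivAt (isingG d θ B) (isingPhi d θ (isingF d θ B t) * isingPhi d θ t) t :=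
  ((hasDerivAt_isingF (t := isingF d θ B t) hθ).comp t (hasDerivAt_isingF hθ)).congr_deriv
    (neg_mul_neg _ _)

theorem continuous_isingG (hθ : 0 ≤ θ) : Continuous (isingG d θ B) :=
  (continuous_isingF hθ).comp (continuous_isingF hθ)

theorem exists_logDerivIsingG_eq_zero (hd : 2 ≤ d) (hθ : 1 < θ) {x y : ℝ} (hxy : x < y)
    (hx : IsFixedPt (isingG d θ B) x) (hy : IsFixedPt (isingG d θ B) y) :
    ∃ ξ ∈ Ioo x y, logDerivIsingG d θ B ξ = 0 := by
  obtain ⟨ξ, hξ, hslope⟩ := exists_hasDerivAt_eq_slope (isingG d θ B) _ hxy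
    (continuous_isingG (by linarith)).continuousOn fun t _ => hasDerivAt_isingG (by linarith)
  rw [hx.eq, hy.eq, div_self (sub_pos.2 hxy).ne'] at hslope
  refine ⟨ξ, hξ, ?_⟩
  rw [logDerivIsingG, ← log_mul (isingPhi_pos hd hθ).ne' (isingPhi_pos hd hθ).ne', mul_comm,
    hslope, log_one]

theorem logDerivIsingG_lt_of_le (hd : 2 ≤ d) (hθ : 1 < θ) {x₁ x₂ x₃ : ℝ} (h₁₂ : x₁ < x₂)
    (h₂₃ : x₂ < x₃) (h : logDerivIsingG d θ B x₂ ≤ logDerivIsingG d θ B x₁) :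
    logDerivIsingG d θ B x₃ < logDerivIsingG d θ B x₂ := by
  have hθ₀ : 0 ≤ θ := by linarith
  have hφ : ∀ t, 0 < isingPhi d θ t := fun t => isingPhi_pos hd hθ
  have hlogφ : ∀ t, HasDerivAt (fun t => log (isingPhi d θ t)) (isingPsi θ t) t := fun t => by
    simpa [(hφ t).ne'] using (hasDerivAt_isingPhi (d := d) (t := t) hθ₀).log (hφ t).ne'
  have hu : ∀ t, HasDerivAt (logDerivIsingG d θ B)
      (isingPsi θ t - isingPhi d θ t * isingPsi θ (isingF d θ B t)) t := fun t => by
    have := (hlogφ t).add ((hlogφ (isingF d θ B t)).comp t (hasDerivAt_isingF (B := B) hθ₀))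
    exact this.congr_deriv (by ring)
  have hu' : ∀ t, HasDerivAt (fun t => isingPsi θ t - isingPhi d θ t * isingPsi θ (isingF d θ B t))
      (isingPsi θ t ^ 2 - 2 * θ * cosh t / isingDenom θ t -
        (isingPhi d θ t * isingPsi θ t * isingPsi θ (isingF d θ B t) + isingPhi d θ t *
          ((isingPsi θ (isingF d θ B t) ^ 2 - 2 * θ * cosh (isingF d θ B t) /
            isingDenom θ (isingF d θ B t)) * -isingPhi d θ t))) t := fun t =>
    (hasDerivAt_isingPsi hθ₀).sub ((hasDerivAt_isingPhi hθ₀).mul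
      ((hasDerivAt_isingPsi hθ₀).comp t (hasDerivAt_isingF hθ₀)))
  refine apply_lt_of_apply_le_of_deriv2_neg hu hu' (fun t ht => ?_) h₁₂ h₂₃ h
  have h₁ := isingPsi_sq_lt (t := t) (zero_lt_one.trans hθ)
  have h₂ := isingPsi_sq_lt (t := isingF d θ B t) (zero_lt_one.trans hθ)
  -- at a critical point `ψ t = φ t * ψ (F t)`, so `u'' = ψ' t - (ψ t)² + (φ t)² ψ' (F t)`
  have hψ : isingPsi θ t = isingPhi d θ t * isingPsi θ (isingF d θ B t) := sub_eq_zero.1 ht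
  rw [hψ] at h₁ ⊢
  nlinarith [mul_le_mul_of_nonneg_left h₂.le (sq_nonneg (isingPhi d θ t))]

end TwoStep

noncomputable def isingTMinus (d : ℕ) (θ B : ℝ) : ℝ := sInf (fixedPoints (isingG d θ B))

section FixedPointsOfTwoStep

variable {d : ℕ} {θ B a s : ℝ}

theorem eq_or_eq_or_eq_of_isFixedPt_isingG (hd : 2 ≤ d) (hθ : 1 < θ) {x y z t : ℝ}
    (hxy : x < y) (hyz : y < z) (hx : IsFixedPt (isingG d θ B) x)
    (hy : IsFixedPt (isingG d θ B) y) (hz : IsFixedPt (isingG d θ B) z)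
    (ht : IsFixedPt (isingG d θ B) t) : t = x ∨ t = y ∨ t = z := by
  have no_four : ∀ {a b c e : ℝ}, a < b → b < c → c < e → IsFixedPt (isingG d θ B) a →
      IsFixedPt (isingG d θ B) b → IsFixedPt (isingG d θ B) c → IsFixedPt (isingG d θ B) e →
      False := by
    intro a b c e hab hbc hce ha hb hc he
    obtain ⟨ξ₁, hξ₁, h₁⟩ := exists_logDerivIsingG_eq_zero hd hθ hab ha hb
    obtain ⟨ξ₂, hξ₂, h₂⟩ := exists_logDerivIsingG_eq_zero hd hθ hbc hb hc
    obtain ⟨ξ₃, hξ₃, h₃⟩ := exists_logDerivIsingG_eq_zero hd hθ hce hc he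
    exact (logDerivIsingG_lt_of_le hd hθ (hξ₁.2.trans hξ₂.1) (hξ₂.2.trans hξ₃.1)
      (h₂.trans h₁.symm).le).ne (h₃.trans h₂.symm)
  rcases lt_trichotomy t x with h | rfl | h
  · exact (no_four h hxy hyz ht hx hy hz).elim
  · exact Or.inl rfl
  rcases lt_trichotomy t y with h' | rfl | h'
  · exact (no_four h h' hyz hx ht hy hz).elim
  · exact Or.inr (Or.inl rfl)
  rcases lt_trichotomy t z with h'' | rfl | h''
  · exact (no_four hxy h' h'' hx hy ht hz).elim
  · exact Or.inr (Or.inr rfl)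
  · exact (no_four hxy hyz h'' hx hy hz ht).elim

theorem exists_isFixedPt_isingG_le (hd : 2 ≤ d) (hθ : 1 < θ) (ha : isingG d θ B a ≤ a) :
    ∃ z ≤ a, IsFixedPt (isingG d θ B) z := by
  set m := min a (2 * B - ((d : ℝ) - 1) * log θ)
  have hm : m ≤ isingG d θ B m := (min_le_right _ _).trans (sub_lt_isingF hd hθ).le
  obtain ⟨z, hz, hfix⟩ := exists_isFixedPt_mem_Icc (continuous_isingG (by linarith)).continuousOn
    (min_le_left _ _) hm ha
  exact ⟨z, hz.2, hfix⟩

theorem lt_isingG_of_forall_lt (hd : 2 ≤ d) (hθ : 1 < θ)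
    (h : ∀ z, IsFixedPt (isingG d θ B) z → a < z) : a < isingG d θ B a := by
  by_contra! ha
  obtain ⟨z, hza, hz⟩ := exists_isFixedPt_isingG_le hd hθ ha
  exact (h z hz).not_ge hza

theorem eventually_isingG_lt (hθ : 1 < θ) (hs : IsFixedPt (isingF d θ B) s)
    (hφ : 1 < isingPhi d θ s) : ∀ᶠ x in 𝓝[<] s, isingG d θ B x < x := by
  have hG := hasDerivAt_isingG (d := d) (θ := θ) (B := B) (t := s) (by linarith)
  rw [hs.eq] at hG
  exact hG.eventually_apply_lt_of_one_lt (hs.comp hs) (by nlinarith)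

theorem isingTMinus_spec (hd : 2 ≤ d) (hθ : 1 < θ) (hs : IsFixedPt (isingF d θ B) s)
    (hφ : 1 < isingPhi d θ s) :
    isingTMinus d θ B < s ∧ s < isingF d θ B (isingTMinus d θ B) ∧
      IsFixedPt (isingG d θ B) (isingTMinus d θ B) ∧
      ∀ t, IsFixedPt (isingG d θ B) t →
        t = isingTMinus d θ B ∨ t = s ∨ t = isingF d θ B (isingTMinus d θ B) := by
  obtain ⟨x, hxG, hxs⟩ := ((eventually_isingG_lt hθ hs hφ).and self_mem_nhdsWithin).exists
  obtain ⟨p, hpx, hp⟩ := exists_isFixedPt_isingG_le hd hθ hxG.le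
  have hps : p < s := hpx.trans_lt hxs
  have hsq : s < isingF d θ B p := hs.eq ▸ isingF_strictAnti hd hθ hps
  have hall := fun t => eq_or_eq_or_eq_of_isFixedPt_isingG hd hθ hps hsq hp (hs.comp hs)
    (congrArg (isingF d θ B) hp) (t := t)
  have hmin : isingTMinus d θ B = p :=
    IsLeast.csInf_eq ⟨hp, fun t ht => by rcases hall t ht with rfl | rfl | rfl <;> linarith⟩
  rw [hmin]
  exact ⟨hps, hsq, hp, hall⟩

theorem lt_isingTMinus_iff (hd : 2 ≤ d) (hθ : 1 < θ) (hs : IsFixedPt (isingF d θ B) s)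
    (hφ : 1 < isingPhi d θ s) (has : a < s) : a < isingTMinus d θ B ↔ a < isingG d θ B a := by
  obtain ⟨-, hsF, -, hall⟩ := isingTMinus_spec hd hθ hs hφ
  refine ⟨fun ha => lt_isingG_of_forall_lt hd hθ fun z hz => ?_, fun ha => ?_⟩
  · rcases hall z hz with rfl | rfl | rfl <;> linarith
  obtain ⟨b, hGb, hab, hbs⟩ :=
    ((eventually_isingG_lt hθ hs hφ).and (Ioo_mem_nhdsLT has)).exists
  obtain ⟨z, ⟨haz, hzb⟩, hz⟩ := exists_isFixedPt_mem_Icc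
    (continuous_isingG (by linarith)).continuousOn hab.le ha.le hGb.le
  rcases hall z hz with rfl | rfl | rfl
  · exact haz.lt_of_ne fun h => ha.ne' (h ▸ hz)
  · linarith
  · linarith

theorem eq_of_isFixedPt_isingG (hd : 2 ≤ d) (hθ : 1 < θ) (hs : IsFixedPt (isingF d θ B) s)
    (hφ : isingPhi d θ s ≤ 1) {t : ℝ} (ht : IsFixedPt (isingG d θ B) t) : t = s := by
  have hanti := isingF_strictAnti (B := B) hd hθ
  have no_cycle : ∀ t, IsFixedPt (isingG d θ B) t → ¬t < isingF d θ B t := by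
    intro t ht hlt
    have hts : t < s := (hanti.lt_apply_iff_lt_of_isFixedPt hs).1 hlt
    have hsF : s < isingF d θ B t := hs.eq ▸ hanti hts
    obtain ⟨ξ₁, hξ₁, h₁⟩ := exists_logDerivIsingG_eq_zero hd hθ hts ht (hs.comp hs)
    obtain ⟨ξ₂, hξ₂, h₂⟩ := exists_logDerivIsingG_eq_zero hd hθ hsF (hs.comp hs)
      (congrArg (isingF d θ B) ht)
    have hus : logDerivIsingG d θ B s ≤ 0 := by
      have := log_nonpos (isingPhi_pos hd hθ).le hφ
      rw [logDerivIsingG, hs.eq]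
      linarith
    have := logDerivIsingG_lt_of_le hd hθ hξ₁.2 hξ₂.1 (h₁ ▸ hus)
    linarith
  refine hanti.eq_of_isFixedPt ?_ hs
  have hFFt : isingF d θ B (isingF d θ B t) = t := ht
  rcases lt_trichotomy t (isingF d θ B t) with h | h | h
  · exact (no_cycle t ht h).elim
  · exact h.symm
  · exact (no_cycle _ (congrArg (isingF d θ B) ht) (by rwa [hFFt])).elim

end FixedPointsOfTwoStep

section Threshold

variable {d : ℕ} {B : ℝ} {ts : ℝ → ℝ}

theorem isingPhi_lt_isingPhi (hd : 2 ≤ d) {θ₁ θ₂ t : ℝ} (h₁ : 0 ≤ θ₁) (h₁₂ : θ₁ < θ₂) :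
    isingPhi d θ₁ t < isingPhi d θ₂ t := by
  have hd' : (0 : ℝ) < d - 1 := by
    have : (2 : ℝ) ≤ d := by exact_mod_cast hd
    linarith
  have hc := one_le_cosh t
  rw [isingPhi, isingPhi, div_lt_div_iff₀ (isingDenom_pos h₁) (isingDenom_pos (by linarith))]
  have key : (θ₂ ^ 2 - 1) * isingDenom θ₁ t - (θ₁ ^ 2 - 1) * isingDenom θ₂ t =
      2 * (θ₂ - θ₁) * ((θ₂ + θ₁) + cosh t * (θ₁ * θ₂ + 1)) := by
    rw [isingDenom, isingDenom]; ring
  have : 0 < (θ₂ ^ 2 - 1) * isingDenom θ₁ t - (θ₁ ^ 2 - 1) * isingDenom θ₂ t := by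
    rw [key]
    have : 0 < (θ₂ + θ₁) + cosh t * (θ₁ * θ₂ + 1) := by
      nlinarith [mul_nonneg h₁ (by linarith : (0 : ℝ) ≤ θ₂)]
    have : 0 < θ₂ - θ₁ := by linarith
    positivity
  nlinarith

theorem isingPhi_le_isingPhi_of_abs_le (hd : 1 ≤ d) {θ t₁ t₂ : ℝ} (hθ : 1 ≤ θ)
    (h : |t₁| ≤ |t₂|) : isingPhi d θ t₂ ≤ isingPhi d θ t₁ := by
  have hd' : (1 : ℝ) ≤ d := by exact_mod_cast hd
  refine div_le_div_of_nonneg_left (mul_nonneg (by linarith) (by nlinarith))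
    (isingDenom_pos (by linarith)) ?_
  have := cosh_le_cosh.2 h
  rw [isingDenom, isingDenom]
  nlinarith

theorem continuousOn_of_isFixedPt_isingF (hd : 2 ≤ d)
    (hts : ∀ θ, 1 < θ → IsFixedPt (isingF d θ B) (ts θ)) : ContinuousOn ts (Ioi 1) :=
  fun _ hθ₀ => (continuousAt_of_isFixedPt_of_strictAnti
    (fun _ => tendsto_id.isingF tendsto_const_nhds (zero_lt_one.trans hθ₀))
    (eventually_of_mem (Ioi_mem_nhds hθ₀) fun _ hθ => isingF_strictAnti hd hθ)
    (eventually_of_mem (Ioi_mem_nhds hθ₀) hts)).continuousWithinAt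

theorem exists_isingPhi_threshold (hd : 3 ≤ d)
    (hts : ∀ θ, 1 < θ → IsFixedPt (isingF d θ B) (ts θ)) :
    ∃ θc, 1 < θc ∧ ∀ θ, 1 < θ → (isingPhi d θ (ts θ) ≤ 1 ↔ θ ≤ θc) := by
  have hd' : (2 : ℝ) ≤ d - 1 := by
    have : (3 : ℝ) ≤ d := by exact_mod_cast hd
    linarith
  have hmono : StrictMonoOn (fun θ => isingPhi d θ (ts θ)) (Ioi 1) := fun θ₁ h₁ θ₂ h₂ h₁₂ =>
    (isingPhi_lt_isingPhi (by omega) (zero_le_one.trans (le_of_lt h₁)) h₁₂).trans_le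
      (isingPhi_le_isingPhi_of_abs_le (by omega) (le_of_lt h₂)
        (abs_le_abs_of_isFixedPt_isingF (by omega) (le_of_lt h₁) h₁₂.le (hts θ₁ h₁) (hts θ₂ h₂)))
  have hcont : ContinuousOn (fun θ => isingPhi d θ (ts θ)) (Ioi 1) := fun θ hθ => by
    have := continuous_cosh.continuousAt.comp
      ((continuousOn_of_isFixedPt_isingF (by omega) hts).continuousAt (Ioi_mem_nhds hθ))
    have hD := isingDenom_pos (t := ts θ) (zero_le_one.trans (le_of_lt hθ))
    have hg : ContinuousAt (fun θ => isingDenom θ (ts θ)) θ := by unfold isingDenom; fun_prop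
    exact (ContinuousAt.div (f := fun θ => ((d : ℝ) - 1) * (θ ^ 2 - 1)) (by fun_prop) hg
      hD.ne').continuousWithinAt
  set θ₀ := 1 + 1 / ((d : ℝ) - 1) with hθ₀def
  set θ₁ := 2 * cosh (2 * B) + 3 with hθ₁def
  have hθ₀ : 1 < θ₀ := lt_add_of_pos_right _ (by positivity)
  have hθ₀₁ : θ₀ ≤ θ₁ := by
    have : 1 / ((d : ℝ) - 1) ≤ 1 := (div_le_one (by linarith)).2 (by linarith)
    linarith [one_le_cosh (2 * B)]
  have hΔ₀ : isingPhi d θ₀ (ts θ₀) ≤ 1 := by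
    have hε : ((d : ℝ) - 1) * (θ₀ - 1) = 1 := by rw [hθ₀def]; field_simp; ring
    rw [isingPhi, div_le_one (isingDenom_pos (by linarith)), isingDenom]
    nlinarith [one_le_cosh (ts θ₀)]
  have hΔ₁ : 1 ≤ isingPhi d θ₁ (ts θ₁) := by
    -- `|ts θ₁| ≤ |2 * B|` because `2 * B` is the fixed point of `isingF d 1 B`
    have hcosh : cosh (ts θ₁) ≤ cosh (2 * B) := cosh_le_cosh.2
      (abs_le_abs_of_isFixedPt_isingF (by omega) le_rfl (by linarith [one_le_cosh (2 * B)])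
        (isingF_one d B (2 * B)) (hts θ₁ (by linarith [one_le_cosh (2 * B)])))
    rw [isingPhi, one_le_div (isingDenom_pos (by linarith [one_le_cosh (2 * B)])), isingDenom]
    nlinarith [one_le_cosh (2 * B), mul_le_mul_of_nonneg_left hcosh (by positivity : (0 : ℝ) ≤ θ₁),
      mul_le_mul_of_nonneg_right hd' (by nlinarith [one_le_cosh (2 * B)] : (0 : ℝ) ≤ θ₁ ^ 2 - 1)]
  obtain ⟨θc, hθc, hΔc⟩ := intermediate_value_Icc hθ₀₁
    (hcont.mono fun θ hθ => hθ₀.trans_le hθ.1) ⟨hΔ₀, hΔ₁⟩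
  have hθc₁ : 1 < θc := hθ₀.trans_le hθc.1
  exact ⟨θc, hθc₁, fun θ hθ => hΔc ▸ hmono.le_iff_le hθ hθc₁⟩

end Threshold

section Continuity

variable {d : ℕ} {B : ℝ} {ts : ℝ → ℝ}

theorem eventually_lt_isingTMinus_iff (hd : 2 ≤ d) {l : Filter ℝ} {θ₀ a : ℝ} (hl : l ≤ 𝓝 θ₀)
    (hθ₀ : 0 < θ₀) (hts : Tendsto ts l (𝓝 (ts θ₀)))
    (hsup : ∀ᶠ θ in l, 1 < θ ∧ IsFixedPt (isingF d θ B) (ts θ) ∧ 1 < isingPhi d θ (ts θ))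
    (ha : a < ts θ₀) (hG : isingG d θ₀ B a ≠ a) :
    ∀ᶠ θ in l, (a < isingTMinus d θ B ↔ a < isingG d θ₀ B a) := by
  have hGl : Tendsto (fun θ => isingG d θ B a) l (𝓝 (isingG d θ₀ B a)) :=
    (tendsto_id.isingF (tendsto_id.isingF tendsto_const_nhds hθ₀) hθ₀).mono_left hl
  have hsign : ∀ᶠ θ in l, (a < isingG d θ B a ↔ a < isingG d θ₀ B a) := by
    rcases hG.lt_or_gt with h | h
    · filter_upwards [hGl.eventually (gt_mem_nhds h)] with θ hθ
        using iff_of_false (not_lt.2 hθ.le) (not_lt.2 h.le)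
    · filter_upwards [hGl.eventually (lt_mem_nhds h)] with θ hθ using iff_of_true hθ h
  filter_upwards [hsign, hsup, hts.eventually (lt_mem_nhds ha)] with θ hθ ⟨h₁, hs, hφ⟩ has
  rw [lt_isingTMinus_iff hd h₁ hs hφ has, hθ]

theorem continuousOn_isingTMinus (hd : 2 ≤ d) {θc : ℝ} (htsc : ContinuousOn ts (Ioi θc))
    (hsup : ∀ θ, θc < θ → 1 < θ ∧ IsFixedPt (isingF d θ B) (ts θ) ∧ 1 < isingPhi d θ (ts θ)) :
    ContinuousOn (fun θ => isingTMinus d θ B) (Ioi θc) := by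
  intro θ₀ hθ₀
  obtain ⟨h₁, hs, hφ⟩ := hsup θ₀ hθ₀
  obtain ⟨hms, hsF, -, hall⟩ := isingTMinus_spec hd h₁ hs hφ
  have hev := fun {a} => eventually_lt_isingTMinus_iff (a := a) hd le_rfl (zero_lt_one.trans h₁)
    (htsc.continuousAt (Ioi_mem_nhds hθ₀)) (eventually_of_mem (Ioi_mem_nhds hθ₀) hsup)
  refine ContinuousAt.continuousWithinAt (tendsto_order.2 ⟨fun a ha => ?_, fun b hb => ?_⟩)
  · have hGa := (lt_isingTMinus_iff hd h₁ hs hφ (ha.trans hms)).1 ha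
    filter_upwards [hev (ha.trans hms) hGa.ne'] with θ h using h.2 hGa
  · obtain ⟨c, hmc, hc⟩ := exists_between (lt_min hb hms)
    have hcs := hc.trans_le (min_le_right _ _)
    have hGc : isingG d θ₀ B c ≠ c := fun h => by rcases hall c h with rfl | rfl | rfl <;> linarith
    have hnot : ¬c < isingG d θ₀ B c := fun h =>
      hmc.not_gt ((lt_isingTMinus_iff hd h₁ hs hφ hcs).2 h)
    filter_upwards [hev hcs hGc] with θ h
    exact (not_lt.1 (h.not.2 hnot)).trans_lt (hc.trans_le (min_le_left _ _))

theorem tendsto_isingTMinus (hd : 2 ≤ d) {θc : ℝ} (hθc : 1 < θc) (htsc : ContinuousAt ts θc)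
    (hcrit : ∀ t, IsFixedPt (isingG d θc B) t → t = ts θc)
    (hsup : ∀ θ, θc < θ → 1 < θ ∧ IsFixedPt (isingF d θ B) (ts θ) ∧ 1 < isingPhi d θ (ts θ)) :
    Tendsto (fun θ => isingTMinus d θ B) (𝓝[>] θc) (𝓝 (ts θc)) := by
  have hsup' : ∀ᶠ θ in 𝓝[>] θc,
      1 < θ ∧ IsFixedPt (isingF d θ B) (ts θ) ∧ 1 < isingPhi d θ (ts θ) :=
    eventually_nhdsWithin_of_forall hsup
  have hts : Tendsto ts (𝓝[>] θc) (𝓝 (ts θc)) := htsc.tendsto.mono_left nhdsWithin_le_nhds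
  refine tendsto_order.2 ⟨fun a ha => ?_, fun b hb => ?_⟩
  · have hGa : a < isingG d θc B a := lt_isingG_of_forall_lt hd hθc fun z hz => hcrit z hz ▸ ha
    filter_upwards [eventually_lt_isingTMinus_iff hd nhdsWithin_le_nhds (zero_lt_one.trans hθc)
      hts hsup' ha hGa.ne'] with θ h using h.2 hGa
  · filter_upwards [hts.eventually (gt_mem_nhds hb), hsup'] with θ h ⟨h₁, hs, hφ⟩
      using (isingTMinus_spec hd h₁ hs hφ).1.trans h

end Continuity

theorem stmt15_general (d : ℕ) (hd : 3 ≤ d) (B : ℝ) (ts : ℝ → ℝ)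
    (hts : ∀ θ : ℝ, 1 < θ → isingF d θ B (ts θ) = ts θ) :
    ∃ θc : ℝ, 1 < θc ∧
      (∀ θ : ℝ, 1 < θ → θ ≤ θc →
        ∀ t : ℝ, isingF d θ B (isingF d θ B t) = t → t = ts θ) ∧
      ∃ tm tp : ℝ → ℝ,
        (∀ θ : ℝ, θc < θ →
          tm θ < ts θ ∧ ts θ < tp θ ∧
          isingF d θ B (isingF d θ B (tm θ)) = tm θ ∧
          isingF d θ B (isingF d θ B (tp θ)) = tp θ ∧
          isingF d θ B (tp θ) = tm θ ∧ isingF d θ B (tm θ) = tp θ ∧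
          (∀ t : ℝ, isingF d θ B (isingF d θ B t) = t →
            t = tm θ ∨ t = ts θ ∨ t = tp θ)) ∧
        ContinuousOn ts (Ioi 1) ∧
        ContinuousOn tm (Ioi θc) ∧
        ContinuousOn tp (Ioi θc) ∧
        Tendsto tm (nhdsWithin θc (Ioi θc)) (nhds (ts θc)) ∧
        Tendsto tp (nhdsWithin θc (Ioi θc)) (nhds (ts θc)) := by
  have hd₂ : 2 ≤ d := by omega
  obtain ⟨θc, hθc, hcrit⟩ := exists_isingPhi_threshold hd hts
  have hsub : ∀ θ, 1 < θ → θ ≤ θc → ∀ t, IsFixedPt (isingG d θ B) t → t = ts θ :=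
    fun θ h₁ h₂ _ ht => eq_of_isFixedPt_isingG hd₂ h₁ (hts θ h₁) ((hcrit θ h₁).2 h₂) ht
  have hsup : ∀ θ, θc < θ → 1 < θ ∧ IsFixedPt (isingF d θ B) (ts θ) ∧
      1 < isingPhi d θ (ts θ) := fun θ hθ =>
    have h₁ := hθc.trans hθ
    ⟨h₁, hts θ h₁, not_le.1 ((hcrit θ h₁).not.2 hθ.not_ge)⟩
  have htsc : ContinuousOn ts (Ioi 1) := continuousOn_of_isFixedPt_isingF hd₂ hts
  have hcont := continuousOn_isingTMinus hd₂ (htsc.mono fun _ hθ => hθc.trans hθ) hsup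
  have hlim := tendsto_isingTMinus hd₂ hθc (htsc.continuousAt (Ioi_mem_nhds hθc))
    (hsub θc hθc le_rfl) hsup
  refine ⟨θc, hθc, hsub, fun θ => isingTMinus d θ B, fun θ => isingF d θ B (isingTMinus d θ B),
    fun θ hθ => ?_, htsc, hcont, fun θ hθ => ?_, hlim, ?_⟩
  · obtain ⟨h₁, hs, hφ⟩ := hsup θ hθ
    obtain ⟨hms, hsF, hm, hall⟩ := isingTMinus_spec hd₂ h₁ hs hφ
    exact ⟨hms, hsF, hm, congrArg (isingF d θ B) hm, hm, rfl, hall⟩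
  · exact (tendsto_id.mono_left nhdsWithin_le_nhds).isingF (hcont θ hθ)
      (zero_lt_one.trans (hsup θ hθ).1)
  · have := (tendsto_id.mono_left nhdsWithin_le_nhds).isingF (d := d) (B := B) hlim
      (zero_lt_one.trans hθc)
    rwa [hts θc hθc] at this

theorem stmt15 (d : ℕ) (hd : 3 ≤ d) (B : ℝ) (ts : ℝ → ℝ)
    (hts : ∀ θ : ℝ, 1 < θ → isingF d θ B (ts θ) = ts θ)
    (htsu : ∀ θ : ℝ, 1 < θ → ∀ s : ℝ, isingF d θ B s = s → s = ts θ) :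
    ∃ θc : ℝ, 1 < θc ∧
      (∀ θ : ℝ, 1 < θ → θ ≤ θc →
        ∀ t : ℝ, isingF d θ B (isingF d θ B t) = t → t = ts θ) ∧
      ∃ tm tp : ℝ → ℝ,
        (∀ θ : ℝ, θc < θ →
          tm θ < ts θ ∧ ts θ < tp θ ∧
          isingF d θ B (isingF d θ B (tm θ)) = tm θ ∧
          isingF d θ B (isingF d θ B (tp θ)) = tp θ ∧
          isingF d θ B (tp θ) = tm θ ∧ isingF d θ B (tm θ) = tp θ ∧
          (∀ t : ℝ, isingF d θ B (isingF d θ B t) = t →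
            t = tm θ ∨ t = ts θ ∨ t = tp θ)) ∧
        ContinuousOn ts (Ioi 1) ∧
        ContinuousOn tm (Ioi θc) ∧
        ContinuousOn tp (Ioi θc) ∧
        Tendsto tm (nhdsWithin θc (Ioi θc)) (nhds (ts θc)) ∧
        Tendsto tp (nhdsWithin θc (Ioi θc)) (nhds (ts θc)) :=
  stmt15_general d hd B ts hts
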